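/- arXiv:1501.07762 — 6 statements merged into one kernel-verified Lean document; each statement's English description precedes it below -/
import Mathlib

section
/- Let X = A *_C B be the amalgamated free product of groups A and B over a common subgroup C. Then every element of finite order in X is conjugate in X to an element of the image of A or to an element of the image of B. -/
/-- The two-element family of groups `A` (at `true`) and `B` (at `false`),
used to express the amalgamated free product `A *_C B` as a pushout. -/
def AmalgamFam (A B : Type) : Bool → Type
  | true => A
  | false => B

instance AmalgamFam.group (A B : Type) [Group A] [Group B] :
    (i : Bool) → Group (AmalgamFam A B i)
  | true => inferInstanceAs (Group A)
  | false => inferInstanceAs (Group B)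

/-- The pair of homomorphisms `ιA : C →* A`, `ιB : C →* B` as a family. -/
def amalgamMaps {A B C : Type} [Group A] [Group B] [Group C]
    (ιA : C →* A) (ιB : C →* B) : (i : Bool) → C →* AmalgamFam A B i
  | true => ιA
  | false => ιB

/-- The amalgamated free product `A *_C B`, i.e. the pushout of `ιA` and `ιB`. -/
def Amalgam {A B C : Type} [Group A] [Group B] [Group C]
    (ιA : C →* A) (ιB : C →* B) : Type :=
  Monoid.PushoutI (amalgamMaps ιA ιB)

instance {A B C : Type} [Group A] [Group B] [Group C] (ιA : C →* A) (ιB : C →* B) :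
    Group (Amalgam ιA ιB) :=
  inferInstanceAs (Group (Monoid.PushoutI _))

/-- The canonical homomorphism `A →* A *_C B`. -/
def Amalgam.inA {A B C : Type} [Group A] [Group B] [Group C]
    (ιA : C →* A) (ιB : C →* B) : A →* Amalgam ιA ιB :=
  Monoid.PushoutI.of (φ := amalgamMaps ιA ιB) true

/-- The canonical homomorphism `B →* A *_C B`. -/
def Amalgam.inB {A B C : Type} [Group A] [Group B] [Group C]
    (ιA : C →* A) (ιB : C →* B) : B →* Amalgam ιA ιB :=
  Monoid.PushoutI.of (φ := amalgamMaps ιA ιB) false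

/-- The canonical homomorphism `C →* A *_C B`. -/
def Amalgam.inC {A B C : Type} [Group A] [Group B] [Group C]
    (ιA : C →* A) (ιB : C →* B) : C →* Amalgam ιA ιB :=
  (Amalgam.inA ιA ιB).comp ιA


/-!
Write an element of finite order as `h · g₁ ⋯ gₙ` with `h` in the base and no letter `gₖ` in
the base, and induct on `n`. If `n ≤ 1` the element lies in a factor. If the first and last
letters lie in different factors, all powers of the word are again reduced and nonempty, so by
the normal form theorem none of them is `1`. If they lie in the same factor, conjugating by the
last letter merges it into the first one, which shortens the word.
-/

namespace Monoid

namespace CoprodI.NeWord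

variable {ι : Type*} {M : ι → Type*} [∀ i, Monoid (M i)]

def powSucc {i j : ι} (w : NeWord M i j) (hji : j ≠ i) : ℕ → NeWord M i j
  | 0 => w
  | n + 1 => append w hji (w.powSucc hji n)

theorem prod_powSucc {i j : ι} (w : NeWord M i j) (hji : j ≠ i) (n : ℕ) :
    (w.powSucc hji n).prod = w.prod ^ (n + 1) := by
  induction n with
  | zero => simp [powSucc]
  | succ n ih => rw [powSucc, append_prod, ih, ← pow_succ']

theorem mem_toList_powSucc {i j : ι} (w : NeWord M i j) (hji : j ≠ i) {n : ℕ}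
    {l : Σ i, M i} (hl : l ∈ (w.powSucc hji n).toList) : l ∈ w.toList := by
  induction n with
  | zero => exact hl
  | succ n ih =>
    simp only [powSucc, toList, List.mem_append] at hl
    exact hl.elim id ih

end CoprodI.NeWord

namespace PushoutI

open CoprodI

variable {ι : Type*} {G : ι → Type*} {H : Type*} [∀ i, Group (G i)] [Group H]
  {φ : ∀ i, H →* G i}

theorem NormalWord.Transversal.eq_one_of_mem_range (d : NormalWord.Transversal φ) {i : ι}
    {g : G i} (hs : g ∈ d.set i) (hr : g ∈ (φ i).range) : g = 1 := by
  have h₁ := (d.compl i).equiv_fst_eq_self_of_mem_of_one_mem (d.one_mem i) hr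
  have h₂ := (d.compl i).equiv_fst_eq_one_of_mem_of_one_mem (Subgroup.one_mem _) hs
  exact congrArg Subtype.val (h₁.symm.trans h₂)

theorem NormalWord.reduced {d : NormalWord.Transversal φ} (w : NormalWord d) :
    Reduced φ w.toWord := fun l hl hr =>
  w.ne_one l hl (d.eq_one_of_mem_range (w.normalized l.1 l.2 hl) hr)

theorem exists_reduced_eq_base_mul (hφ : ∀ i, Function.Injective (φ i)) (x : PushoutI φ) :
    ∃ (h : H) (w : Word G), Reduced φ w ∧ x = base φ h * ofCoprodI w.prod := by
  classical
  obtain ⟨d⟩ := NormalWord.transversal_nonempty φ hφ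
  let w : NormalWord d := x • .empty
  refine ⟨w.head, w.toWord, w.reduced, ?_⟩
  rw [← NormalWord.prod, NormalWord.prod_smul, NormalWord.prod_empty, mul_one]

theorem Reduced.cons {i : ι} {g : G i} {w : Word G} (hmw : w.fstIdx ≠ some i) (h1 : g ≠ 1)
    (hg : g ∉ (φ i).range) (hw : Reduced φ w) : Reduced φ (Word.cons g w hmw h1) := by
  rintro l (_ | ⟨_, hl⟩)
  exacts [hg, hw l hl]

theorem Reduced.exists_base_mul_eq {w : Word G} (hw : Reduced φ w) (hne : w ≠ .empty) (h : H) :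
    ∃ v : Word G, Reduced φ v ∧ v.toList.length = w.toList.length ∧
      ofCoprodI v.prod = base φ h * ofCoprodI w.prod := by
  induction w using Word.consRecOn with
  | empty => exact absurd rfl hne
  | cons i g w hmw _ _ =>
    have hg : g ∉ (φ i).range := hw _ List.mem_cons_self
    have hg' : φ i h * g ∉ (φ i).range := fun hr =>
      hg (by simpa using Subgroup.mul_mem _ (MonoidHom.mem_range.2 ⟨h⁻¹, rfl⟩) hr)
    have h1 : φ i h * g ≠ 1 := fun h1 => hg' (h1 ▸ Subgroup.one_mem _)
    refine ⟨Word.cons _ w hmw h1,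
      .cons _ _ hg' fun l hl => hw l (List.mem_cons_of_mem _ hl), by simp, ?_⟩
    simp [← of_apply_eq_base φ i, mul_assoc]

theorem Reduced.not_isOfFinOrder_of_first_ne_last (hφ : ∀ i, Function.Injective (φ i))
    {w : Word G} (hw : Reduced φ w) {i j : ι} {g : G i} {g' : G j} {m : List (Σ i, G i)}
    (hl : w.toList = ⟨i, g⟩ :: (m ++ [⟨j, g'⟩])) (hij : i ≠ j) :
    ¬IsOfFinOrder (ofCoprodI (φ := φ) w.prod) := by
  obtain ⟨i', j', u, rfl⟩ := NeWord.of_word w (by rintro rfl; simp at hl)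
  have hl' : u.toList = _ := hl
  obtain ⟨rfl, -⟩ : i = i' ∧ _ := by simpa [hl'] using u.toList_head?
  obtain ⟨rfl, -⟩ : j = j' ∧ _ := by simpa [hl', List.getLast?_cons] using u.toList_getLast?
  intro hfin
  obtain ⟨n, hn, hpow⟩ := hfin.exists_pow_eq_one
  obtain ⟨n, rfl⟩ := Nat.exists_eq_add_one_of_ne_zero hn.ne'
  let v := u.powSucc hij.symm n
  have hv : Reduced φ v.toWord := fun l hl => hw l (u.mem_toList_powSucc hij.symm hl)
  have hv1 : ofCoprodI (φ := φ) v.toWord.prod = 1 := by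
    rw [← NeWord.prod, u.prod_powSucc, map_pow]
    exact hpow
  have := hv.eq_empty_of_mem_range hφ (hv1 ▸ Subgroup.one_mem _)
  exact v.toList_ne_nil (congrArg Word.toList this)

theorem Reduced.exists_isConj_shorter_of_first_eq_last {w : Word G} (hw : Reduced φ w) {i : ι}
    {g g' : G i} {m : List (Σ i, G i)} (hl : w.toList = ⟨i, g⟩ :: (m ++ [⟨i, g'⟩])) :
    ∃ v : Word G, Reduced φ v ∧ v.toList.length < w.toList.length ∧
      IsConj (ofCoprodI (φ := φ) w.prod) (ofCoprodI v.prod) := by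
  have hinfix : m <:+: w.toList := hl ▸ ⟨[⟨i, g⟩], [⟨i, g'⟩], rfl⟩
  let u : Word G := ⟨m, fun l hl => w.ne_one l (hinfix.subset hl), w.chain_ne.infix hinfix⟩
  have hu : Reduced φ u := fun l hl => hw l (hinfix.subset hl)
  have hchain := hl ▸ w.chain_ne
  have hmne : m ≠ [] := by rintro rfl; simp at hchain
  have hmw : u.fstIdx ≠ some i := Word.fstIdx_ne_iff.2 fun l hl =>
    (List.isChain_cons.1 hchain).1 l (List.mem_head?_append_of_mem_head? hl)
  have hconj : IsConj (ofCoprodI (φ := φ) w.prod) (of i (g' * g) * ofCoprodI u.prod) :=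
    isConj_iff.2 ⟨of i g', by simp [Word.prod, hl, u, mul_assoc]⟩
  by_cases ha : g' * g ∈ (φ i).range
  · obtain ⟨h, hh⟩ := ha
    obtain ⟨v, hv, hlen, hprod⟩ := hu.exists_base_mul_eq (fun he => hmne congr(($he).toList)) h
    refine ⟨v, hv, by simp [hlen, hl, u], ?_⟩
    rwa [hprod, ← of_apply_eq_base φ i, hh]
  · have h1 : g' * g ≠ 1 := fun h1 => ha (h1 ▸ Subgroup.one_mem _)
    refine ⟨Word.cons (g' * g) u hmw h1, hu.cons hmw h1 ha, by simp [hl, u], ?_⟩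
    simpa using hconj

theorem Reduced.exists_isConj_mem_range [Nonempty ι] (hφ : ∀ i, Function.Injective (φ i))
    {w : Word G} (hw : Reduced φ w) (hfin : IsOfFinOrder (ofCoprodI (φ := φ) w.prod)) :
    ∃ i, ∃ y ∈ (of (φ := φ) i).range, IsConj (ofCoprodI w.prod) y := by
  induction hn : w.toList.length using Nat.strong_induction_on generalizing w with
  | _ n ih =>
  match hl : w.toList with
  | [] => exact ⟨Classical.arbitrary ι, 1, Subgroup.one_mem _, by simp [Word.prod, hl]⟩
  | [⟨i, g⟩] => exact ⟨i, _, ⟨g, by simp [Word.prod, hl]⟩, .refl _⟩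
  | ⟨i, g⟩ :: b :: t =>
    obtain ⟨m, ⟨j, g'⟩, hbt⟩ : ∃ m c, b :: t = m ++ [c] :=
      ⟨_, _, (List.dropLast_append_getLast (List.cons_ne_nil b t)).symm⟩
    rw [hbt] at hl
    obtain rfl | hij := eq_or_ne i j
    · obtain ⟨v, hv, hlt, hconj⟩ := hw.exists_isConj_shorter_of_first_eq_last hl
      obtain ⟨k, y, hy, hvy⟩ := ih _ (hn ▸ hlt) hv (hconj.isOfFinOrder hfin) rfl
      exact ⟨k, y, hy, hconj.trans hvy⟩
    · exact absurd hfin (hw.not_isOfFinOrder_of_first_ne_last hφ hl hij)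

theorem exists_isConj_mem_range_of_isOfFinOrder [Nonempty ι]
    (hφ : ∀ i, Function.Injective (φ i)) {x : PushoutI φ} (hfin : IsOfFinOrder x) :
    ∃ i, ∃ y ∈ (of (φ := φ) i).range, IsConj x y := by
  obtain ⟨h, w, hw, rfl⟩ := exists_reduced_eq_base_mul hφ x
  by_cases hne : w = .empty
  · subst hne
    let i := Classical.arbitrary ι
    exact ⟨i, _, ⟨φ i h, by simp [of_apply_eq_base]⟩, .refl _⟩
  · obtain ⟨v, hv, -, hvw⟩ := hw.exists_base_mul_eq hne h
    rw [← hvw] at hfin ⊢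
    exact hv.exists_isConj_mem_range hφ hfin

end PushoutI

end Monoid

/-- In the amalgamated free product `X = A *_C B`, every element of finite order
is conjugate in `X` to an element of the image of `A` or to an element of the
image of `B`. -/
theorem amalgam_isOfFinOrder_conj_mem_factor
    {A B C : Type} [Group A] [Group B] [Group C]
    (ιA : C →* A) (ιB : C →* B)
    (hιA : Function.Injective ιA) (hιB : Function.Injective ιB)
    (x : Amalgam ιA ιB) (hx : IsOfFinOrder x) :
    ∃ g : Amalgam ιA ιB,
      g * x * g⁻¹ ∈ (Amalgam.inA ιA ιB).range ∨
      g * x * g⁻¹ ∈ (Amalgam.inB ιA ιB).range := by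
  have hφ : ∀ i, Function.Injective (amalgamMaps ιA ιB i)
    | true => hιA
    | false => hιB
  obtain ⟨i, y, hy, hxy⟩ := Monoid.PushoutI.exists_isConj_mem_range_of_isOfFinOrder hφ hx
  obtain ⟨g, rfl⟩ := isConj_iff.1 hxy
  cases i
  exacts [⟨g, .inr hy⟩, ⟨g, .inl hy⟩]
end

section
/- Every proper normal subgroup N of X is torsion-free, i.e. contains no element of finite order other than the identity; equivalently, if a normal subgroup N of X contains an element of order p or an element of order q, then N = X. -/
/-!
A torsion element of an amalgam with injective edge maps is conjugate into a factor: after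
reduction and cyclic reduction, a word of length at least two has infinite order. So a normal
subgroup `N` containing a nontrivial torsion element meets `A` or `B` nontrivially. A nontrivial
normal subgroup `M` of `A` contains `Z(Q)`: if it meets the `q`-group `Q` it meets its centre,
and if not, it has order `p = [A : Q]`, so it contains `S_p` and hence `[Q, S_p] = Q`, absurd.
Then generators pass back and forth through `C`: `Z(Q) = S_q ≤ N` gives `P = [P, S_q] ≤ N`,
hence `Z(P) = S_p ≤ N` and `Q = [Q, S_p] ≤ N`; so `N` contains `C = S_p S_q`, `A = Q C` and
`B = P C`.
-/

namespace Monoid.PushoutI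

open CoprodI

variable {ι : Type*} {G : ι → Type*} [∀ i, Group (G i)] {H : Type*} [Group H]
  {φ : ∀ i, H →* G i}

variable (φ) in
def listProd (L : List (Σ i, G i)) : PushoutI φ :=
  (L.map fun a => of a.1 a.2).prod

@[simp] lemma listProd_nil : listProd φ [] = 1 := rfl

@[simp] lemma listProd_cons (a : Σ i, G i) (L : List (Σ i, G i)) :
    listProd φ (a :: L) = of a.1 a.2 * listProd φ L := by
  simp [listProd]

@[simp] lemma listProd_append (L₁ L₂ : List (Σ i, G i)) :
    listProd φ (L₁ ++ L₂) = listProd φ L₁ * listProd φ L₂ := by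
  simp [listProd]

lemma listProd_flatten_replicate (L : List (Σ i, G i)) (m : ℕ) :
    listProd φ (List.replicate m L).flatten = listProd φ L ^ m := by
  induction m with
  | zero => simp
  | succ m ih => rw [List.replicate_succ, List.flatten_cons, listProd_append, ih, pow_succ']

lemma ofCoprodI_word_prod (w : Word G) : ofCoprodI w.prod = listProd φ w.toList := by
  simp [Word.prod, listProd, map_list_prod, Function.comp_def]

lemma base_mul_listProd_cons (h : H) (i : ι) (g : G i) (L : List (Σ i, G i)) :
    base φ h * listProd φ (⟨i, g⟩ :: L) = listProd φ (⟨i, φ i h * g⟩ :: L) := by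
  simp [← of_apply_eq_base φ i, mul_assoc]

variable (φ) in
def IsReducedList (L : List (Σ i, G i)) : Prop :=
  (∀ a ∈ L, a.2 ∉ (φ a.1).range) ∧ L.IsChain (fun a b => a.1 ≠ b.1)

lemma exists_base_mul_listProd_eq (hφ : ∀ i, Function.Injective (φ i)) (x : PushoutI φ) :
    ∃ h L, IsReducedList φ L ∧ base φ h * listProd φ L = x := by
  classical
  obtain ⟨d⟩ := NormalWord.transversal_nonempty φ hφ
  set w : NormalWord d := x • NormalWord.empty
  refine ⟨w.head, w.toList, ⟨fun a ha ⟨h, hh⟩ => w.ne_one a ha ?_, w.chain_ne⟩, ?_⟩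
  -- a letter of a normal word lies in the transversal, which meets the base group only in `1`
  · have hd := w.normalized a.1 a.2 ha
    rw [← (d.compl a.1).equiv_snd_eq_self_iff_mem (one_mem _)] at hd
    rw [← hd, Subgroup.IsComplement.coe_equiv_snd_eq_one_iff_mem _ (d.one_mem _), ← hh]
    exact ⟨h, rfl⟩
  · rw [← ofCoprodI_word_prod, ← NormalWord.prod, NormalWord.prod_smul, NormalWord.prod_empty,
      mul_one]

namespace IsReducedList

variable {L : List (Σ i, G i)}

def toWord (hL : IsReducedList φ L) : Word G where
  toList := L
  ne_one a ha h1 := hL.1 a ha ⟨1, by rw [map_one, h1]⟩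
  chain_ne := hL.2

lemma eq_nil_of_mem_range (hφ : ∀ i, Function.Injective (φ i)) (hL : IsReducedList φ L)
    (h : listProd φ L ∈ (base φ).range) : L = [] := by
  have := Reduced.eq_empty_of_mem_range hφ (w := hL.toWord) hL.1
    (by rwa [ofCoprodI_word_prod])
  exact congrArg Word.toList this

lemma base_mul_cons {i : ι} {g : G i} (hL : IsReducedList φ (⟨i, g⟩ :: L)) (h : H) :
    IsReducedList φ (⟨i, φ i h * g⟩ :: L) := by
  refine ⟨?_, List.isChain_cons.2 (List.isChain_cons.1 hL.2)⟩
  rintro a (_ | ⟨_, ha⟩)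
  · rintro ⟨k, hk⟩
    exact hL.1 _ List.mem_cons_self ⟨h⁻¹ * k, by simp [hk]⟩
  · exact hL.1 a (List.mem_cons_of_mem _ ha)

lemma flatten_replicate (hL : IsReducedList φ L)
    (hcyc : ∀ a ∈ L.getLast?, ∀ b ∈ L.head?, a.1 ≠ b.1) (m : ℕ) :
    IsReducedList φ (List.replicate m L).flatten := by
  refine ⟨fun a ha => ?_, ?_⟩
  · obtain ⟨_, hM, ha⟩ := List.mem_flatten.1 ha
    rw [List.eq_of_mem_replicate hM] at ha
    exact hL.1 a ha
  · induction m with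
    | zero => exact List.isChain_nil
    | succ m ih =>
      rw [List.replicate_succ, List.flatten_cons]
      refine hL.2.append ih fun a ha b hb => hcyc a ha b ?_
      cases m with
      | zero => simp at hb
      | succ m => rcases L with _ | ⟨c, L⟩ <;> simp_all

lemma not_isOfFinOrder (hφ : ∀ i, Function.Injective (φ i)) (hL : IsReducedList φ L)
    (hne : L ≠ []) (hcyc : ∀ a ∈ L.getLast?, ∀ b ∈ L.head?, a.1 ≠ b.1) :
    ¬ IsOfFinOrder (listProd φ L) := by
  intro hfin
  obtain ⟨m, hm, hpow⟩ := isOfFinOrder_iff_pow_eq_one.1 hfin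
  have hmem : listProd φ (List.replicate m L).flatten ∈ (base φ).range :=
    ⟨1, by rw [map_one, listProd_flatten_replicate, hpow]⟩
  have := (hL.flatten_replicate hcyc m).eq_nil_of_mem_range hφ hmem
  simp [List.flatten_eq_nil_iff, hne, hm.ne'] at this

lemma exists_isConj_shorter {i : ι} {g b : G i} {T : List (Σ i, G i)}
    (hL : IsReducedList φ (⟨i, g⟩ :: (T ++ [⟨i, b⟩]))) :
    ∃ h L, IsReducedList φ L ∧ L.length ≤ T.length + 1 ∧
      IsConj (listProd φ (⟨i, g⟩ :: (T ++ [⟨i, b⟩]))) (base φ h * listProd φ L) := by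
  have hconj :
      IsConj (listProd φ (⟨i, g⟩ :: (T ++ [⟨i, b⟩]))) (of i (b * g) * listProd φ T) :=
    isConj_iff.2 ⟨of i b, by simp [mul_assoc]⟩
  have hchain := List.isChain_cons.1 hL.2
  have hT : IsReducedList φ T :=
    ⟨fun a ha => hL.1 a (by simp [ha]), hchain.2.left_of_append⟩
  by_cases hbg : b * g ∈ (φ i).range
  · obtain ⟨h, hh⟩ := hbg
    exact ⟨h, T, hT, by omega, by rwa [← hh, of_apply_eq_base] at hconj⟩
  · refine ⟨1, ⟨i, b * g⟩ :: T, ⟨?_, ?_⟩, le_rfl, by simpa using hconj⟩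
    · rintro a (_ | ⟨_, ha⟩)
      exacts [hbg, hT.1 a ha]
    · refine List.isChain_cons.2 ⟨fun c hc => hchain.1 c ?_, hT.2⟩
      rcases T with _ | ⟨d, T⟩ <;> simp_all

end IsReducedList

theorem exists_isConj_of_of_isOfFinOrder [Nonempty ι] (hφ : ∀ i, Function.Injective (φ i))
    {x : PushoutI φ} (hx : IsOfFinOrder x) : ∃ i, ∃ a : G i, IsConj x (of i a) := by
  obtain ⟨h, L, hL, rfl⟩ := exists_base_mul_listProd_eq hφ x
  induction hn : L.length using Nat.strong_induction_on generalizing h L with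
  | _ n ih =>
  match L with
  | [] =>
    exact ⟨Classical.arbitrary ι, φ _ h, by rw [listProd_nil, mul_one, of_apply_eq_base]⟩
  | ⟨i, g⟩ :: T =>
    rw [base_mul_listProd_cons] at hx ⊢
    replace hL := hL.base_mul_cons h
    rcases T.eq_nil_or_concat with rfl | ⟨T, ⟨j, b⟩, rfl⟩
    · exact ⟨i, _, by rw [listProd_cons, listProd_nil, mul_one]⟩
    · rw [List.concat_eq_append] at hL hx ⊢
      by_cases hij : j = i
      · subst hij
        obtain ⟨h', L', hL', hlen, hconj⟩ := hL.exists_isConj_shorter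
        obtain ⟨k, a, ha⟩ := ih L'.length (by simp at hn; omega) h' L' hL'
          (hconj.isOfFinOrder hx) rfl
        exact ⟨k, a, hconj.trans ha⟩
      · refine absurd hx (hL.not_isOfFinOrder hφ (by simp) ?_)
        rw [← List.cons_append, List.getLast?_concat]
        simpa using hij

end Monoid.PushoutI

section

open Subgroup

theorem IsPGroup.inf_center_ne_bot {p : ℕ} [Fact p.Prime] {G : Type*} [Group G] [Finite G]
    (hG : IsPGroup p G) {N : Subgroup G} [N.Normal] (hN : N ≠ ⊥) : N ⊓ center G ≠ ⊥ := by
  have : Nontrivial N := (nontrivial_iff_ne_bot N).2 hN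
  obtain ⟨n, hn, hcard⟩ := (hG.to_subgroup N).nontrivial_iff_card.1 this
  obtain ⟨z, hz, hz1⟩ :=
    (hG.of_equiv ConjAct.toConjAct).exists_fixed_point_of_prime_dvd_card_of_fixed_point N
      (hcard ▸ dvd_pow_self p hn.ne') (a := 1) (fun g => smul_one g)
  rw [ne_bot_iff_exists_ne_one]
  refine ⟨⟨z, z.2, ?_⟩, fun h => hz1 (Subtype.ext (congrArg Subtype.val h).symm)⟩
  change (z : G) ∈ (center G : Set G)
  rw [← ConjAct.fixedPoints_eq_center]
  exact fun g => congrArg Subtype.val (hz g)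

theorem IsPGroup.inf_inf_centralizer_ne_bot {p : ℕ} [Fact p.Prime] {G : Type*} [Group G]
    {Q N : Subgroup G} [Finite Q] (hQ : IsPGroup p Q) [N.Normal] (h : N ⊓ Q ≠ ⊥) :
    N ⊓ (Q ⊓ centralizer (Q : Set G)) ≠ ⊥ := by
  have hN : N.subgroupOf Q ≠ ⊥ := by
    rwa [Ne, subgroupOf_eq_bot, disjoint_iff]
  obtain ⟨⟨z, hzN, hzZ⟩, hz1⟩ := (ne_bot_iff_exists_ne_one.1 (hQ.inf_center_ne_bot hN))
  rw [ne_bot_iff_exists_ne_one]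
  refine ⟨⟨z, hzN, z.2, fun g hg => ?_⟩, fun h => hz1 ?_⟩
  · exact congrArg Subtype.val (mem_center_iff.1 hzZ ⟨g, hg⟩)
  · ext
    simpa using congrArg Subtype.val h

theorem Subgroup.le_of_coprime_card_index {G : Type*} [Group G] {S N : Subgroup G} [N.Normal]
    (h : (Nat.card S).Coprime N.index) : S ≤ N :=
  relIndex_eq_one.1 <| Nat.eq_one_of_dvd_coprimes h (relIndex_dvd_card N S)
    (N.relIndex_dvd_index_of_normal S)

theorem Subgroup.card_dvd_index_of_inf_eq_bot {G : Type*} [Group G] {M N : Subgroup G} [N.Normal]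
    (h : M ⊓ N = ⊥) : Nat.card M ∣ N.index := by
  have := N.relIndex_dvd_index_of_normal M
  rwa [relIndex, subgroupOf_eq_bot.2 (disjoint_iff.2 (inf_comm M N ▸ h)), index_bot] at this

/-- The configuration of one factor `G` of the amalgam: `Q` is a normal Sylow `q`-subgroup, `Z`
its centre, and `S` the subgroup of order `p` of `ι(C)`. For `B` the roles of `p` and `q` swap. -/
structure IsAmalgamFactor (p q : ℕ) {G C : Type*} [Group G] [Group C] (ι : C →* G)
    (Q : Sylow q G) (Z S : Subgroup G) : Prop where
  injective : Function.Injective ι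
  card_eq : Nat.card C = p * q
  normal : (Q : Subgroup G).Normal
  center_eq : Z = (Q : Subgroup G) ⊓ centralizer ((Q : Subgroup G) : Set G)
  card_center : Nat.card Z = q
  center_le_range : Z ≤ ι.range
  mul_range : ∀ g, ∃ u ∈ (Q : Subgroup G), ∃ c, g = u * ι c
  card_S : Nat.card S = p
  unique_S : ∀ D ≤ ι.range, Nat.card D = p → D = S
  commutator_eq : ⁅(Q : Subgroup G), S⁆ = Q

namespace IsAmalgamFactor

variable {p q : ℕ} {G C : Type*} [Group G] [Group C] {ι : C →* G} {Q : Sylow q G}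
  {Z S : Subgroup G}

lemma center_le (h : IsAmalgamFactor p q ι Q Z S) : Z ≤ Q :=
  h.center_eq ▸ inf_le_left

lemma sup_range_eq_top (h : IsAmalgamFactor p q ι Q Z S) : (Q : Subgroup G) ⊔ ι.range = ⊤ :=
  eq_top_iff.2 fun g _ => by
    obtain ⟨u, hu, c, rfl⟩ := h.mul_range g
    exact mul_mem_sup hu ⟨c, rfl⟩

lemma index_dvd (h : IsAmalgamFactor p q ι Q Z S) : (Q : Subgroup G).index ∣ p * q := by
  have := h.normal
  have hdvd : (Q : Subgroup G).relIndex ι.range ∣ Nat.card ι.range := relIndex_dvd_card _ _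
  rwa [← relIndex_sup_left, h.sup_range_eq_top, relIndex_top_right,
    MonoidHom.range_eq_map, card_map_of_injective h.injective, card_top, h.card_eq] at hdvd

lemma card_comap_center (h : IsAmalgamFactor p q ι Q Z S) : Nat.card (Z.comap ι) = q := by
  rw [← h.card_center, ← map_comap_eq_self h.center_le_range,
    card_map_of_injective h.injective, map_comap_eq_self h.center_le_range]

lemma le_of_le (h : IsAmalgamFactor p q ι Q Z S) {M : Subgroup G} (hM : M.Normal)
    (hSM : S ≤ M) : (Q : Subgroup G) ≤ M := by
  rw [← h.commutator_eq]
  exact (commutator_mono le_rfl hSM).trans (commutator_le_right _ _)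

lemma dvd_card (h : IsAmalgamFactor p q ι Q Z S) : q ∣ Nat.card (Q : Subgroup G) :=
  (dvd_of_eq h.card_center.symm).trans (card_dvd_of_le h.center_le)

lemma le_of_le_comap (h : IsAmalgamFactor p q ι Q Z S) {M : Subgroup G} (hM : M.Normal)
    {T : Subgroup C} (hT : Nat.card T = p) (hTM : T ≤ M.comap ι) : (Q : Subgroup G) ≤ M := by
  have hS : T.map ι = S :=
    h.unique_S _ (map_le_range ι T) (by rw [card_map_of_injective h.injective, hT])
  exact h.le_of_le hM (hS ▸ map_le_iff_le_comap.2 hTM)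

lemma eq_top_of_le (h : IsAmalgamFactor p q ι Q Z S) {M : Subgroup G} (hQ : (Q : Subgroup G) ≤ M)
    (hι : M.comap ι = ⊤) : M = ⊤ := by
  rw [eq_top_iff, ← h.sup_range_eq_top, sup_le_iff, MonoidHom.range_eq_map, map_le_iff_le_comap,
    hι]
  exact ⟨hQ, le_rfl⟩

lemma le_of_normal_of_inf_eq_bot [Finite G] (h : IsAmalgamFactor p q ι Q Z S) (hp : p.Prime)
    (hq : q.Prime) (hpq : p ≠ q) {M : Subgroup G} (hMn : M.Normal) (hM : M ≠ ⊥)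
    (hMQ : M ⊓ Q = ⊥) : S ≤ M := by
  have := h.normal
  have := Fact.mk hq
  have hidx : (Q : Subgroup G).index ∣ p :=
    (Q.card_coprime_index.coprime_dvd_left h.dvd_card).symm.dvd_of_dvd_mul_right h.index_dvd
  have hMdvd := (card_dvd_index_of_inf_eq_bot hMQ).trans hidx
  have hMcard : Nat.card M = p :=
    (hp.eq_one_or_self_of_dvd _ hMdvd).resolve_left (mt card_eq_one.1 hM)
  have hQidx : (Q : Subgroup G).index = p :=
    Nat.dvd_antisymm hidx (hMcard ▸ card_dvd_index_of_inf_eq_bot hMQ)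
  have hMidx : M.index = Nat.card (Q : Subgroup G) := by
    have := (Q : Subgroup G).card_mul_index
    rw [← M.card_mul_index, hMcard, hQidx, mul_comm _ p] at this
    exact Nat.eq_of_mul_eq_mul_left hp.pos this.symm
  obtain ⟨k, hk⟩ := IsPGroup.iff_card.1 Q.isPGroup'
  refine le_of_coprime_card_index ?_
  rw [h.card_S, hMidx, hk]
  exact ((Nat.coprime_primes hp hq).2 hpq).pow_right k

lemma center_le_of_normal [Finite G] (h : IsAmalgamFactor p q ι Q Z S) (hp : p.Prime)
    (hq : q.Prime) (hpq : p ≠ q) {M : Subgroup G} (hMn : M.Normal) (hM : M ≠ ⊥) :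
    Z ≤ M := by
  have := Fact.mk hq
  have hMQ : M ⊓ Q ≠ ⊥ := by
    intro hMQ
    have hQ := le_inf (h.le_of_le hMn (h.le_of_normal_of_inf_eq_bot hp hq hpq hMn hM hMQ)) le_rfl
    rw [hMQ, le_bot_iff, ← card_eq_one] at hQ
    exact hq.one_lt.ne' (Nat.dvd_one.1 (hQ ▸ h.dvd_card))
  have hMZ := IsPGroup.inf_inf_centralizer_ne_bot Q.isPGroup' hMQ
  rw [← h.center_eq] at hMZ
  have hdvd : Nat.card (M ⊓ Z : Subgroup G) ∣ q :=
    (card_dvd_of_le inf_le_right).trans (dvd_of_eq h.card_center)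
  have hcard := (hq.eq_one_or_self_of_dvd _ hdvd).resolve_left (mt card_eq_one.1 hMZ)
  exact inf_eq_right.1 (eq_of_le_of_card_ge inf_le_right (by rw [hcard, h.card_center]))

end IsAmalgamFactor

end

namespace Amalgam

variable {A B C : Type} [Group A] [Group B] [Group C] {ιA : C →* A} {ιB : C →* B}

lemma inB_comp : (inB ιA ιB).comp ιB = inC ιA ιB :=
  (Monoid.PushoutI.of_comp_eq_base (φ := amalgamMaps ιA ιB) false).trans
    (Monoid.PushoutI.of_comp_eq_base (φ := amalgamMaps ιA ιB) true).symm

lemma injective_amalgamMaps (hιA : Function.Injective ιA) (hιB : Function.Injective ιB) :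
    ∀ i, Function.Injective (amalgamMaps ιA ιB i)
  | true => hιA
  | false => hιB

lemma eq_top_of_comap_eq_top {N : Subgroup (Amalgam ιA ιB)} (hA : N.comap (inA ιA ιB) = ⊤)
    (hB : N.comap (inB ιA ιB) = ⊤) : N = ⊤ := by
  suffices ∀ x, x ∈ N from eq_top_iff.2 fun x _ => this x
  intro x
  induction x using Monoid.PushoutI.induction_on with
  | of i g => cases i with
    | true => exact (hA ▸ Subgroup.mem_top g : g ∈ N.comap (inA ιA ιB))
    | false => exact (hB ▸ Subgroup.mem_top g : g ∈ N.comap (inB ιA ιB))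
  | base c =>
    rw [← Monoid.PushoutI.of_apply_eq_base _ true]
    exact (hA ▸ Subgroup.mem_top (ιA c) : ιA c ∈ N.comap (inA ιA ιB))
  | mul x y hx hy => exact mul_mem hx hy

lemma comap_ne_bot_of_isOfFinOrder (hιA : Function.Injective ιA) (hιB : Function.Injective ιB)
    {N : Subgroup (Amalgam ιA ιB)} (hN : N.Normal) {x : Amalgam ιA ιB} (hxN : x ∈ N)
    (hx : IsOfFinOrder x) (hx1 : x ≠ 1) :
    N.comap (inA ιA ιB) ≠ ⊥ ∨ N.comap (inB ιA ιB) ≠ ⊥ := by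
  obtain ⟨i, a, hconj⟩ :=
    Monoid.PushoutI.exists_isConj_of_of_isOfFinOrder (injective_amalgamMaps hιA hιB) hx
  obtain ⟨c, hc⟩ := isConj_iff.1 hconj
  have haN : Monoid.PushoutI.of i a ∈ N := hc ▸ hN.conj_mem x hxN c
  have ha1 : a ≠ 1 := by
    rintro rfl
    rw [map_one] at hconj
    exact hx1 (isConj_one_left.1 hconj)
  have hne : N.comap (Monoid.PushoutI.of i) ≠ ⊥ :=
    Subgroup.ne_bot_iff_exists_ne_one.2 ⟨⟨a, haN⟩, fun h => ha1 (congrArg Subtype.val h)⟩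
  cases i
  exacts [Or.inr hne, Or.inl hne]

theorem eq_top_of_isOfFinOrder {p q : ℕ} (hp : p.Prime) (hq : q.Prime) (hpq : p ≠ q)
    [Finite A] [Finite B] {Q : Sylow q A} {P : Sylow p B} {ZQ SpA : Subgroup A}
    {ZP SqB : Subgroup B} (hA : IsAmalgamFactor p q ιA Q ZQ SpA)
    (hB : IsAmalgamFactor q p ιB P ZP SqB) {N : Subgroup (Amalgam ιA ιB)} (hN : N.Normal)
    {x : Amalgam ιA ιB} (hxN : x ∈ N) (hx : IsOfFinOrder x) (hx1 : x ≠ 1) : N = ⊤ := by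
  set K := N.comap (inC ιA ιB)
  have hKB : (N.comap (inB ιA ιB)).comap ιB = K := by rw [Subgroup.comap_comap, inB_comp]
  have toA (h : ZP.comap ιB ≤ K) : (Q : Subgroup A) ≤ N.comap (inA ιA ιB) :=
    hA.le_of_le_comap (hN.comap _) hB.card_comap_center h
  have toB (h : ZQ.comap ιA ≤ K) : (P : Subgroup B) ≤ N.comap (inB ιA ιB) :=
    hB.le_of_le_comap (hN.comap _) hA.card_comap_center (hKB ▸ h)
  have fromA (h : (Q : Subgroup A) ≤ N.comap (inA ιA ιB)) : ZQ.comap ιA ≤ K :=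
    Subgroup.comap_mono (hA.center_le.trans h)
  have fromB (h : (P : Subgroup B) ≤ N.comap (inB ιA ιB)) : ZP.comap ιB ≤ K :=
    hKB ▸ Subgroup.comap_mono (hB.center_le.trans h)
  have hQP :
      (Q : Subgroup A) ≤ N.comap (inA ιA ιB) ∧ (P : Subgroup B) ≤ N.comap (inB ιA ιB) := by
    rcases comap_ne_bot_of_isOfFinOrder hA.injective hB.injective hN hxN hx hx1 with hNA | hNB
    · have hP := toB (Subgroup.comap_mono (hA.center_le_of_normal hp hq hpq (hN.comap _) hNA))
      exact ⟨toA (fromB hP), hP⟩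
    · have hQ :=
        toA (hKB ▸ Subgroup.comap_mono (hB.center_le_of_normal hq hp hpq.symm (hN.comap _) hNB))
      exact ⟨hQ, toB (fromA hQ)⟩
  have : Finite C := Nat.finite_of_card_ne_zero (hA.card_eq ▸ (Nat.mul_pos hp.pos hq.pos).ne')
  have hK : K = ⊤ := by
    refine Subgroup.eq_top_of_le_card _ (Nat.le_of_dvd Nat.card_pos ?_)
    rw [hA.card_eq]
    exact ((Nat.coprime_primes hp hq).2 hpq).mul_dvd_of_dvd_of_dvd
      (hB.card_comap_center ▸ Subgroup.card_dvd_of_le (fromB hQP.2))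
      (hA.card_comap_center ▸ Subgroup.card_dvd_of_le (fromA hQP.1))
  exact eq_top_of_comap_eq_top (hA.eq_top_of_le hQP.1 hK) (hB.eq_top_of_le hQP.2 (hKB.trans hK))

end Amalgam

theorem amalgam_proper_normal_subgroup_torsionFree_general
    (p q : ℕ) (hp : p.Prime) (hq : q.Prime)
    (hpq : p ≠ q)
    {A B C : Type} [Group A] [Group B] [Group C] [Finite A] [Finite B]
    -- `Q` is a nonabelian normal Sylow `q`-subgroup of `A`,
    -- `P` is a nonabelian normal Sylow `p`-subgroup of `B`
    (Q : Sylow q A) (P : Sylow p B)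
    (hQnormal : (Q : Subgroup A).Normal) (hPnormal : (P : Subgroup B).Normal)
    -- `ZQ = Z(Q)` has order `q` and `ZP = Z(P)` has order `p`
    (ZQ : Subgroup A)
    (hZQ : ZQ = (Q : Subgroup A) ⊓ Subgroup.centralizer ((Q : Subgroup A) : Set A))
    (hZQcard : Nat.card ZQ = q)
    (ZP : Subgroup B)
    (hZP : ZP = (P : Subgroup B) ⊓ Subgroup.centralizer ((P : Subgroup B) : Set B))
    (hZPcard : Nat.card ZP = p)
    -- `C` is cyclic of order `p * q`, embedded in `A` and `B`
    (hCcard : Nat.card C = p * q)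
    (ιA : C →* A) (ιB : C →* B)
    (hιA : Function.Injective ιA) (hιB : Function.Injective ιB)
    -- `ιA(C)` is self-normalizing in `A`, contains `Z(Q)` as its unique subgroup of
    -- order `q`, and `A = Q * ιA(C)`
    (hZQle : ZQ ≤ ιA.range)
    (hAfact : ∀ a : A, ∃ u ∈ (Q : Subgroup A), ∃ c : C, a = u * ιA c)
    -- `ιB(C)` is self-normalizing in `B`, contains `Z(P)` as its unique subgroup of
    -- order `p`, and `B = P * ιB(C)`
    (hZPle : ZP ≤ ιB.range)
    (hBfact : ∀ b : B, ∃ u ∈ (P : Subgroup B), ∃ c : C, b = u * ιB c)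
    -- `SpA` is the unique subgroup of order `p` of `ιA(C)`, and
    -- `SqB` is the unique subgroup of order `q` of `ιB(C)`
    (SpA : Subgroup A) (hSpA_card : Nat.card SpA = p)
    (hSpA_uniq : ∀ D : Subgroup A, D ≤ ιA.range → Nat.card D = p → D = SpA)
    (SqB : Subgroup B) (hSqB_card : Nat.card SqB = q)
    (hSqB_uniq : ∀ D : Subgroup B, D ≤ ιB.range → Nat.card D = q → D = SqB)
    -- the commutator conditions `[Q, S_p] = Q` and `[P, S_q] = P`
    (hQcommutator : ⁅(Q : Subgroup A), SpA⁆ = (Q : Subgroup A))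
    (hPcommutator : ⁅(P : Subgroup B), SqB⁆ = (P : Subgroup B))
    :
    (∀ N : Subgroup (Amalgam ιA ιB), N.Normal → N ≠ ⊤ →
      ∀ x ∈ N, IsOfFinOrder x → x = 1) ∧
    (∀ N : Subgroup (Amalgam ιA ιB), N.Normal →
      (∃ x ∈ N, orderOf x = p ∨ orderOf x = q) → N = ⊤) := by
  have hA : IsAmalgamFactor p q ιA Q ZQ SpA := ⟨hιA, hCcard, hQnormal, hZQ, hZQcard, hZQle,
    hAfact, hSpA_card, hSpA_uniq, hQcommutator⟩
  have hB : IsAmalgamFactor q p ιB P ZP SqB := ⟨hιB, hCcard.trans (mul_comm p q), hPnormal, hZP,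
    hZPcard, hZPle, hBfact, hSqB_card, hSqB_uniq, hPcommutator⟩
  refine ⟨fun N hN hNtop x hxN hx => ?_, fun N hN ⟨x, hxN, hord⟩ => ?_⟩
  · by_contra hx1
    exact hNtop (Amalgam.eq_top_of_isOfFinOrder hp hq hpq hA hB hN hxN hx hx1)
  · have hprime : (orderOf x).Prime := hord.elim (· ▸ hp) (· ▸ hq)
    exact Amalgam.eq_top_of_isOfFinOrder hp hq hpq hA hB hN hxN (orderOf_pos_iff.1 hprime.pos)
      fun h => hprime.ne_one (h ▸ orderOf_one)

/-- Every proper normal subgroup `N` of `X = A *_C B` is torsion-free; equivalently,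
if a normal subgroup `N` of `X` contains an element of order `p` or an element of
order `q`, then `N = X`. -/
theorem amalgam_proper_normal_subgroup_torsionFree
    (p q : ℕ) (hp : p.Prime) (hq : q.Prime) (hpodd : Odd p) (hqodd : Odd q)
    (hpq : p ≠ q)
    {A B C : Type} [Group A] [Group B] [Group C] [Finite A] [Finite B]
    -- `Q` is a nonabelian normal Sylow `q`-subgroup of `A`,
    -- `P` is a nonabelian normal Sylow `p`-subgroup of `B`
    (Q : Sylow q A) (P : Sylow p B)
    (hQnormal : (Q : Subgroup A).Normal) (hPnormal : (P : Subgroup B).Normal)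
    (hQnonab : ¬ IsMulCommutative (Q : Subgroup A))
    (hPnonab : ¬ IsMulCommutative (P : Subgroup B))
    -- `ZQ = Z(Q)` has order `q` and `ZP = Z(P)` has order `p`
    (ZQ : Subgroup A)
    (hZQ : ZQ = (Q : Subgroup A) ⊓ Subgroup.centralizer ((Q : Subgroup A) : Set A))
    (hZQcard : Nat.card ZQ = q)
    (ZP : Subgroup B)
    (hZP : ZP = (P : Subgroup B) ⊓ Subgroup.centralizer ((P : Subgroup B) : Set B))
    (hZPcard : Nat.card ZP = p)
    -- `C` is cyclic of order `p * q`, embedded in `A` and `B`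
    (hC : IsCyclic C) (hCcard : Nat.card C = p * q)
    (ιA : C →* A) (ιB : C →* B)
    (hιA : Function.Injective ιA) (hιB : Function.Injective ιB)
    -- `ιA(C)` is self-normalizing in `A`, contains `Z(Q)` as its unique subgroup of
    -- order `q`, and `A = Q * ιA(C)`
    (hCA_selfnorm : Subgroup.normalizer (ιA.range : Set A) = ιA.range)
    (hZQle : ZQ ≤ ιA.range)
    (hZQuniq : ∀ D : Subgroup A, D ≤ ιA.range → Nat.card D = q → D = ZQ)
    (hAfact : ∀ a : A, ∃ u ∈ (Q : Subgroup A), ∃ c : C, a = u * ιA c)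
    -- `ιB(C)` is self-normalizing in `B`, contains `Z(P)` as its unique subgroup of
    -- order `p`, and `B = P * ιB(C)`
    (hCB_selfnorm : Subgroup.normalizer (ιB.range : Set B) = ιB.range)
    (hZPle : ZP ≤ ιB.range)
    (hZPuniq : ∀ D : Subgroup B, D ≤ ιB.range → Nat.card D = p → D = ZP)
    (hBfact : ∀ b : B, ∃ u ∈ (P : Subgroup B), ∃ c : C, b = u * ιB c)
    -- `SpA` is the unique subgroup of order `p` of `ιA(C)`, and
    -- `SqB` is the unique subgroup of order `q` of `ιB(C)`
    (SpA : Subgroup A) (hSpA_le : SpA ≤ ιA.range) (hSpA_card : Nat.card SpA = p)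
    (hSpA_uniq : ∀ D : Subgroup A, D ≤ ιA.range → Nat.card D = p → D = SpA)
    (SqB : Subgroup B) (hSqB_le : SqB ≤ ιB.range) (hSqB_card : Nat.card SqB = q)
    (hSqB_uniq : ∀ D : Subgroup B, D ≤ ιB.range → Nat.card D = q → D = SqB)
    -- the normalizer conditions `N_B(S_q) = ιB(C)` and `N_A(S_p) = ιA(C)`
    (hSqB_norm : Subgroup.normalizer (SqB : Set B) = ιB.range)
    (hSpA_norm : Subgroup.normalizer (SpA : Set A) = ιA.range)
    -- the commutator conditions `[Q, S_p] = Q` and `[P, S_q] = P`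
    (hQcommutator : ⁅(Q : Subgroup A), SpA⁆ = (Q : Subgroup A))
    (hPcommutator : ⁅(P : Subgroup B), SqB⁆ = (P : Subgroup B))
    :
    (∀ N : Subgroup (Amalgam ιA ιB), N.Normal → N ≠ ⊤ →
      ∀ x ∈ N, IsOfFinOrder x → x = 1) ∧
    (∀ N : Subgroup (Amalgam ιA ιB), N.Normal →
      (∃ x ∈ N, orderOf x = p ∨ orderOf x = q) → N = ⊤) :=
  amalgam_proper_normal_subgroup_torsionFree_general p q hp hq hpq Q P hQnormal hPnormal ZQ hZQ
    hZQcard ZP hZP hZPcard hCcard ιA ιB hιA hιB hZQle hAfact hZPle hBfact SpA hSpA_card hSpA_uniq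
    SqB hSqB_card hSqB_uniq hQcommutator hPcommutator
end

section
/- X is a perfect group: the commutator subgroup [X, X] equals X. -/
/-!
Both `Q = [Q, S_p]` and `P = [P, S_q]` are commutator subgroups, so their images lie in `[X, X]`.
The subgroups of `C` carried onto `Z(Q) ≤ Q` and onto `Z(P) ≤ P` have coprime orders `q` and `p`,
hence generate `C`; so `C ≤ [X, X]` as well. Since `A = Q C` and `B = P C`, the images of `A` and
`B` lie in `[X, X]`, and they generate `X`.
-/

namespace Subgroup

variable {G H : Type*} [Group G] [Group H]

theorem map_le_commutator_of_commutator_eq {K L : Subgroup G} (h : ⁅K, L⁆ = K) (f : G →* H) :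
    K.map f ≤ _root_.commutator H := by
  rw [_root_.commutator_def, ← h, map_commutator]
  exact commutator_mono le_top le_top

theorem sup_eq_top_of_coprime_of_card_mul_eq [Finite G] {K L : Subgroup G}
    (hcop : (Nat.card K).Coprime (Nat.card L)) (hcard : Nat.card K * Nat.card L = Nat.card G) :
    K ⊔ L = ⊤ := by
  refine eq_top_of_card_eq _ (Nat.dvd_antisymm (card_subgroup_dvd_card _) ?_)
  rw [← hcard]
  exact hcop.mul_dvd_of_dvd_of_dvd (card_dvd_of_le le_sup_left) (card_dvd_of_le le_sup_right)

theorem card_comap_of_le_range {f : G →* H} (hf : Function.Injective f) {K : Subgroup H}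
    (hK : K ≤ f.range) : Nat.card (K.comap f) = Nat.card K := by
  rw [← card_map_of_injective hf, map_comap_eq_self hK]

theorem sup_range_eq_top_of_forall_eq_mul {C : Type*} [Group C] {K : Subgroup G} {ι : C →* G}
    (h : ∀ g, ∃ u ∈ K, ∃ c, g = u * ι c) : K ⊔ ι.range = ⊤ := by
  refine eq_top_iff.mpr fun g _ => ?_
  obtain ⟨u, hu, c, rfl⟩ := h g
  exact mul_mem (mem_sup_left hu) (mem_sup_right ⟨c, rfl⟩)

theorem map_comp_comap_le {C : Type*} [Group C] {ι : C →* G} {f : G →* H} {K L : Subgroup G}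
    (hKL : K ≤ L) : (K.comap ι).map (f.comp ι) ≤ L.map f := by
  rw [← map_map]
  exact map_mono ((map_comap_le _ _).trans hKL)

end Subgroup

theorem MonoidHom.range_le_of_sup_range_eq_top {G H C : Type*} [Group G] [Group H] [Group C]
    {f : G →* H} {K : Subgroup G} {ι : C →* G} {S : Subgroup H} (hsup : K ⊔ ι.range = ⊤)
    (hK : K.map f ≤ S) (hι : (f.comp ι).range ≤ S) : f.range ≤ S := by
  rw [range_eq_map, ← hsup, Subgroup.map_sup, ← range_comp]
  exact sup_le hK hι

theorem Monoid.PushoutI.eq_top_of_forall_range_of_le {ι H : Type*} {G : ι → Type*} [Nonempty ι]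
    [∀ i, Group (G i)] [Group H] {φ : ∀ i, H →* G i} {S : Subgroup (PushoutI φ)}
    (h : ∀ i, (of i : G i →* PushoutI φ).range ≤ S) : S = ⊤ := by
  rw [Subgroup.eq_top_iff']
  intro x
  induction x using Monoid.PushoutI.induction_on with
  | of i g => exact h i ⟨g, rfl⟩
  | base c =>
    obtain ⟨i⟩ := ‹Nonempty ι›
    exact of_apply_eq_base φ i c ▸ h i ⟨φ i c, rfl⟩
  | mul x y hx hy => exact mul_mem hx hy

theorem Amalgam.inB_comp_eq_inC {A B C : Type} [Group A] [Group B] [Group C]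
    (ιA : C →* A) (ιB : C →* B) : (Amalgam.inB ιA ιB).comp ιB = Amalgam.inC ιA ιB :=
  (Monoid.PushoutI.of_comp_eq_base false).trans (Monoid.PushoutI.of_comp_eq_base true).symm

theorem amalgam_perfect_general
    (p q : ℕ) (hp : p.Prime) (hq : q.Prime)
    (hpq : p ≠ q)
    {A B C : Type} [Group A] [Group B] [Group C]
    -- `Q` is a nonabelian normal Sylow `q`-subgroup of `A`,
    -- `P` is a nonabelian normal Sylow `p`-subgroup of `B`
    (Q : Sylow q A) (P : Sylow p B)
    -- `ZQ = Z(Q)` has order `q` and `ZP = Z(P)` has order `p`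
    (ZQ : Subgroup A)
    (hZQ : ZQ = (Q : Subgroup A) ⊓ Subgroup.centralizer ((Q : Subgroup A) : Set A))
    (hZQcard : Nat.card ZQ = q)
    (ZP : Subgroup B)
    (hZP : ZP = (P : Subgroup B) ⊓ Subgroup.centralizer ((P : Subgroup B) : Set B))
    (hZPcard : Nat.card ZP = p)
    -- `C` is cyclic of order `p * q`, embedded in `A` and `B`
    (hCcard : Nat.card C = p * q)
    (ιA : C →* A) (ιB : C →* B)
    (hιA : Function.Injective ιA) (hιB : Function.Injective ιB)
    -- `ιA(C)` is self-normalizing in `A`, contains `Z(Q)` as its unique subgroup of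
    -- order `q`, and `A = Q * ιA(C)`
    (hZQle : ZQ ≤ ιA.range)
    (hAfact : ∀ a : A, ∃ u ∈ (Q : Subgroup A), ∃ c : C, a = u * ιA c)
    -- `ιB(C)` is self-normalizing in `B`, contains `Z(P)` as its unique subgroup of
    -- order `p`, and `B = P * ιB(C)`
    (hZPle : ZP ≤ ιB.range)
    (hBfact : ∀ b : B, ∃ u ∈ (P : Subgroup B), ∃ c : C, b = u * ιB c)
    -- `SpA` is the unique subgroup of order `p` of `ιA(C)`, and
    -- `SqB` is the unique subgroup of order `q` of `ιB(C)`
    (SpA : Subgroup A)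
    (SqB : Subgroup B)
    -- the commutator conditions `[Q, S_p] = Q` and `[P, S_q] = P`
    (hQcommutator : ⁅(Q : Subgroup A), SpA⁆ = (Q : Subgroup A))
    (hPcommutator : ⁅(P : Subgroup B), SqB⁆ = (P : Subgroup B))
    :
    commutator (Amalgam ιA ιB) = ⊤ := by
  have hQX := Subgroup.map_le_commutator_of_commutator_eq hQcommutator (Amalgam.inA ιA ιB)
  have hPX := Subgroup.map_le_commutator_of_commutator_eq hPcommutator (Amalgam.inB ιA ιB)
  have : Finite C := Nat.finite_of_card_ne_zero (hCcard ▸ mul_ne_zero hp.ne_zero hq.ne_zero)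
  have hCgen : ZQ.comap ιA ⊔ ZP.comap ιB = ⊤ := by
    apply Subgroup.sup_eq_top_of_coprime_of_card_mul_eq <;>
      rw [Subgroup.card_comap_of_le_range hιA hZQle, Subgroup.card_comap_of_le_range hιB hZPle,
        hZQcard, hZPcard]
    · exact (Nat.coprime_primes hq hp).mpr hpq.symm
    · rw [hCcard, mul_comm]
  have hCX : (Amalgam.inC ιA ιB).range ≤ commutator (Amalgam ιA ιB) := by
    rw [MonoidHom.range_eq_map, ← hCgen, Subgroup.map_sup]
    refine sup_le ((Subgroup.map_comp_comap_le (hZQ.le.trans inf_le_left)).trans hQX) ?_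
    rw [← Amalgam.inB_comp_eq_inC]
    exact (Subgroup.map_comp_comap_le (hZP.le.trans inf_le_left)).trans hPX
  apply Monoid.PushoutI.eq_top_of_forall_range_of_le
  rintro (_ | _)
  · exact MonoidHom.range_le_of_sup_range_eq_top
      (Subgroup.sup_range_eq_top_of_forall_eq_mul hBfact) hPX (Amalgam.inB_comp_eq_inC ιA ιB ▸ hCX)
  · exact MonoidHom.range_le_of_sup_range_eq_top
      (Subgroup.sup_range_eq_top_of_forall_eq_mul hAfact) hQX hCX

/-- `X = A *_C B` is a perfect group: the commutator subgroup `[X, X]` equals `X`. -/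
theorem amalgam_perfect
    (p q : ℕ) (hp : p.Prime) (hq : q.Prime) (hpodd : Odd p) (hqodd : Odd q)
    (hpq : p ≠ q)
    {A B C : Type} [Group A] [Group B] [Group C] [Finite A] [Finite B]
    -- `Q` is a nonabelian normal Sylow `q`-subgroup of `A`,
    -- `P` is a nonabelian normal Sylow `p`-subgroup of `B`
    (Q : Sylow q A) (P : Sylow p B)
    (hQnormal : (Q : Subgroup A).Normal) (hPnormal : (P : Subgroup B).Normal)
    (hQnonab : ¬ IsMulCommutative (Q : Subgroup A))
    (hPnonab : ¬ IsMulCommutative (P : Subgroup B))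
    -- `ZQ = Z(Q)` has order `q` and `ZP = Z(P)` has order `p`
    (ZQ : Subgroup A)
    (hZQ : ZQ = (Q : Subgroup A) ⊓ Subgroup.centralizer ((Q : Subgroup A) : Set A))
    (hZQcard : Nat.card ZQ = q)
    (ZP : Subgroup B)
    (hZP : ZP = (P : Subgroup B) ⊓ Subgroup.centralizer ((P : Subgroup B) : Set B))
    (hZPcard : Nat.card ZP = p)
    -- `C` is cyclic of order `p * q`, embedded in `A` and `B`
    (hC : IsCyclic C) (hCcard : Nat.card C = p * q)
    (ιA : C →* A) (ιB : C →* B)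
    (hιA : Function.Injective ιA) (hιB : Function.Injective ιB)
    -- `ιA(C)` is self-normalizing in `A`, contains `Z(Q)` as its unique subgroup of
    -- order `q`, and `A = Q * ιA(C)`
    (hCA_selfnorm : Subgroup.normalizer (ιA.range : Set A) = ιA.range)
    (hZQle : ZQ ≤ ιA.range)
    (hZQuniq : ∀ D : Subgroup A, D ≤ ιA.range → Nat.card D = q → D = ZQ)
    (hAfact : ∀ a : A, ∃ u ∈ (Q : Subgroup A), ∃ c : C, a = u * ιA c)
    -- `ιB(C)` is self-normalizing in `B`, contains `Z(P)` as its unique subgroup of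
    -- order `p`, and `B = P * ιB(C)`
    (hCB_selfnorm : Subgroup.normalizer (ιB.range : Set B) = ιB.range)
    (hZPle : ZP ≤ ιB.range)
    (hZPuniq : ∀ D : Subgroup B, D ≤ ιB.range → Nat.card D = p → D = ZP)
    (hBfact : ∀ b : B, ∃ u ∈ (P : Subgroup B), ∃ c : C, b = u * ιB c)
    -- `SpA` is the unique subgroup of order `p` of `ιA(C)`, and
    -- `SqB` is the unique subgroup of order `q` of `ιB(C)`
    (SpA : Subgroup A) (hSpA_le : SpA ≤ ιA.range) (hSpA_card : Nat.card SpA = p)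
    (hSpA_uniq : ∀ D : Subgroup A, D ≤ ιA.range → Nat.card D = p → D = SpA)
    (SqB : Subgroup B) (hSqB_le : SqB ≤ ιB.range) (hSqB_card : Nat.card SqB = q)
    (hSqB_uniq : ∀ D : Subgroup B, D ≤ ιB.range → Nat.card D = q → D = SqB)
    -- the normalizer conditions `N_B(S_q) = ιB(C)` and `N_A(S_p) = ιA(C)`
    (hSqB_norm : Subgroup.normalizer (SqB : Set B) = ιB.range)
    (hSpA_norm : Subgroup.normalizer (SpA : Set A) = ιA.range)
    -- the commutator conditions `[Q, S_p] = Q` and `[P, S_q] = P`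
    (hQcommutator : ⁅(Q : Subgroup A), SpA⁆ = (Q : Subgroup A))
    (hPcommutator : ⁅(P : Subgroup B), SqB⁆ = (P : Subgroup B))
    :
    commutator (Amalgam ιA ιB) = ⊤ :=
  amalgam_perfect_general p q hp hq hpq Q P ZQ hZQ hZQcard ZP hZP hZPcard hCcard ιA ιB hιA hιB hZQle
    hAfact hZPle hBfact SpA SqB hQcommutator hPcommutator
end

section
/- Every nonidentity element z of Z(Q) is isolated in X: for every x ∈ X, if z commutes with x z x⁻¹ then x z x⁻¹ = z. Symmetrically, every nonidentity element of Z(P) is isolated in X. -/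
def IsIsolated {G : Type*} [Group G] (z : G) : Prop :=
  ∀ x : G, Commute z (x * z * x⁻¹) → x * z * x⁻¹ = z

namespace Monoid.PushoutI

open Function Monoid.CoprodI

variable {ι : Type*} {G : ι → Type*} [∀ i, Group (G i)] {H : Type*} [Group H]
  {φ : ∀ i, H →* G i} {i : ι} {c : H}

theorem ofCoprodI_prod_mem_range_of_forall_fst_eq {w : Word G}
    (h : ∀ l ∈ w.toList, l.1 = i) : ofCoprodI w.prod ∈ (of (φ := φ) i).range := by
  rw [Word.prod, map_list_prod, List.map_map]
  refine Subgroup.list_prod_mem _ fun x hx => ?_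
  obtain ⟨l, hl, rfl⟩ := List.mem_map.1 hx
  obtain rfl := h l hl
  exact ⟨l.2, (ofCoprodI_of _ _).symm⟩

theorem Reduced.forall_fst_eq_of_mem_range (hφ : ∀ i, Injective (φ i)) {w : Word G}
    (hw : Reduced φ w) (h : ofCoprodI w.prod ∈ (of (φ := φ) i).range) :
    ∀ l ∈ w.toList, l.1 = i := by
  obtain ⟨g, hg⟩ := h
  by_cases hgφ : g ∈ (φ i).range
  · obtain ⟨c, rfl⟩ := hgφ
    have hw_empty := hw.eq_empty_of_mem_range hφ ⟨c, by rw [← hg, of_apply_eq_base]⟩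
    simp [hw_empty, Word.empty]
  · -- `w` and the one-letter word `[g]` have the same product, hence the same normal form
    obtain ⟨d⟩ := NormalWord.transversal_nonempty φ hφ
    have hg1 : g ≠ 1 := by rintro rfl; exact hgφ (one_mem _)
    let u : Word G := ⟨[⟨i, g⟩], by simpa using hg1, List.isChain_singleton _⟩
    have hu : Reduced φ u := by simpa [Reduced, u] using hgφ
    obtain ⟨w₁, hw₁, hw₁l⟩ := hw.exists_normalWord_prod_eq d
    obtain ⟨u₁, hu₁, hu₁l⟩ := hu.exists_normalWord_prod_eq d
    have hu_prod : ofCoprodI u.prod = of (φ := φ) i g := by simp [u, Word.prod]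
    have := NormalWord.prod_injective (hw₁.trans (hg.symm.trans hu_prod.symm ▸ hu₁.symm))
    intro l hl
    have hmem : l.1 ∈ u.toList.map Sigma.fst := by
      rw [← hu₁l, ← this, hw₁l]; exact List.mem_map_of_mem hl
    simpa [u] using hmem

theorem exists_eq_base_mul_reduced (hφ : ∀ i, Injective (φ i)) (x : PushoutI φ) :
    ∃ (h : H) (w : Word G), Reduced φ w ∧ x = base φ h * ofCoprodI w.prod := by
  classical
  obtain ⟨d⟩ := NormalWord.transversal_nonempty φ hφ
  let n : NormalWord d := x • NormalWord.empty
  refine ⟨n.head, n.toWord, fun l hl ⟨c, hc⟩ => n.ne_one l hl ?_, ?_⟩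
  · -- a letter lies both in the transversal and in the range of `φ`, so it is `1`
    have hcompl := d.compl l.1
    have := (hcompl.equiv_fst_eq_self_of_mem_of_one_mem (d.one_mem l.1) ⟨c, hc⟩).symm.trans
      (hcompl.equiv_fst_eq_one_of_mem_of_one_mem (one_mem _) (n.normalized l.1 l.2 hl))
    simpa using congrArg Subtype.val this
  · exact (show n.prod = x by simp [n]).symm

theorem commute_base_of_mem_range (hc : φ i c ∈ Subgroup.center (G i))
    {x : PushoutI φ} (hx : x ∈ (of (φ := φ) i).range) : Commute x (base φ c) := by
  obtain ⟨a, rfl⟩ := hx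
  rw [← of_apply_eq_base φ i c]
  exact Commute.map (Subgroup.mem_center_iff.1 hc a) (of i)

theorem Reduced.exists_neWord_conj {j k : ι} {v : NeWord G k k} (hv : Reduced φ v.toWord)
    (hkj : k ≠ j) {g : G j} (hg : g ∉ (φ j).range) :
    ∃ v' : NeWord G j j, Reduced φ v'.toWord ∧ (∀ l ∈ v.toList, l ∈ v'.toList) ∧
      ofCoprodI (φ := φ) v'.prod = of j g * ofCoprodI v.prod * (of j g)⁻¹ := by
  have hg1 : g ≠ 1 := fun h => hg (h ▸ one_mem _)
  refine ⟨(NeWord.singleton g hg1).append hkj.symm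
    (v.append hkj (.singleton g⁻¹ (inv_ne_one.2 hg1))), ?_, fun l hl => by simp [hl], ?_⟩
  · intro l hl
    simp only [NeWord.toWord, NeWord.toList, List.mem_append, List.mem_singleton] at hl
    rcases hl with rfl | hl | rfl
    · exact hg
    · exact hv l hl
    · simpa using hg
  · simp [mul_assoc]

/-- Induction on the first letter `g ∈ G j`. If the rest of the word lies in `G i`, it fixes
`base φ c`, and for `j ≠ i` the single letter `g * φ j c * g⁻¹` lies outside `φ j H` by `hmal`;
otherwise `g` wraps a word that starts and ends outside `G j`, so nothing cancels. -/
theorem Reduced.conj_base_eq_neWord_prod (hc : φ i c ∈ Subgroup.center (G i))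
    (hmal : ∀ j ≠ i, ∀ g : G j, g * φ j c * g⁻¹ ∈ (φ j).range → g ∈ (φ j).range)
    {w : Word G} (hw : Reduced φ w) :
    (∀ l ∈ w.toList, l.1 = i) ∨
      ∃ k, w.fstIdx = some k ∧ ∃ v : NeWord G k k, Reduced φ v.toWord ∧
        (∃ l ∈ v.toList, l.1 ≠ i) ∧
        ofCoprodI w.prod * base φ c * (ofCoprodI w.prod)⁻¹ = ofCoprodI v.prod := by
  classical
  induction w using Word.consRecOn with
  | empty => exact Or.inl (by simp [Word.empty])
  | cons j g w hgw hg ih =>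
    have hgφ : g ∉ (φ j).range := hw ⟨j, g⟩ List.mem_cons_self
    have hconj : ofCoprodI (Word.cons g w hgw hg).prod * base φ c *
        (ofCoprodI (Word.cons g w hgw hg).prod)⁻¹
        = of j g * (ofCoprodI w.prod * base φ c * (ofCoprodI w.prod)⁻¹) * (of j g)⁻¹ := by
      rw [Word.prod_cons, map_mul, ofCoprodI_of]; group
    have hfst : (Word.cons g w hgw hg).fstIdx = some j := by simp [Word.cons, Word.fstIdx]
    rcases ih fun l hl => hw l (List.mem_cons_of_mem _ hl) with
      hall | ⟨k, hk, v, hv, ⟨l, hl, hli⟩, hveq⟩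
    · by_cases hji : j = i
      · subst hji
        exact Or.inl (by simpa [Word.cons] using hall)
      · have hfix := (commute_base_of_mem_range hc
          (ofCoprodI_prod_mem_range_of_forall_fst_eq hall)).mul_inv_cancel
        have hconjφ : g * φ j c * g⁻¹ ∉ (φ j).range := fun h => hgφ (hmal j hji g h)
        have hconj1 : g * φ j c * g⁻¹ ≠ 1 := fun h => hconjφ (h ▸ one_mem _)
        refine Or.inr ⟨j, hfst, .singleton _ hconj1, by simpa [Reduced, NeWord.toWord] using hconjφ,
          ⟨⟨j, _⟩, List.mem_singleton_self _, hji⟩, ?_⟩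
        rw [hconj, hfix, ← of_apply_eq_base φ j c]
        simp
    · obtain ⟨v', hv', hvv', hv'eq⟩ := hv.exists_neWord_conj (fun h : k = j => hgw (h ▸ hk)) hgφ
      exact Or.inr ⟨j, hfst, v', hv', ⟨l, hvv' l hl, hli⟩, by rw [hconj, hveq, hv'eq]⟩

theorem mem_range_of_conj_base_mem_range (hφ : ∀ i, Injective (φ i))
    (hc : φ i c ∈ Subgroup.center (G i))
    (hmal : ∀ j ≠ i, ∀ g : G j, g * φ j c * g⁻¹ ∈ (φ j).range → g ∈ (φ j).range)
    {x : PushoutI φ} (hx : x * base φ c * x⁻¹ ∈ (of (φ := φ) i).range) :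
    x ∈ (of (φ := φ) i).range := by
  obtain ⟨h, w, hw, rfl⟩ := exists_eq_base_mul_reduced hφ x
  have hh : base φ h ∈ (of (φ := φ) i).range := ⟨φ i h, of_apply_eq_base φ i h⟩
  rcases hw.conj_base_eq_neWord_prod hc hmal with hall | ⟨k, -, v, hv, ⟨l, hl, hli⟩, hveq⟩
  · exact mul_mem hh (ofCoprodI_prod_mem_range_of_forall_fst_eq hall)
  · refine absurd (hv.forall_fst_eq_of_mem_range hφ ?_ l hl) hli
    rw [← NeWord.prod, ← hveq]
    convert mul_mem (mul_mem (inv_mem hh) hx) hh using 1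
    group

theorem isIsolated_base (hφ : ∀ i, Injective (φ i)) (hc : φ i c ∈ Subgroup.center (G i))
    (hmal : ∀ j ≠ i, ∀ g : G j, g * φ j c * g⁻¹ ∈ (φ j).range → g ∈ (φ j).range) :
    IsIsolated (base φ c) := by
  intro x hx
  have hz : base φ c ∈ (of (φ := φ) i).range := ⟨φ i c, of_apply_eq_base φ i c⟩
  have hy := mem_range_of_conj_base_mem_range hφ hc hmal (hx.symm.mul_inv_cancel ▸ hz)
  exact (commute_base_of_mem_range hc
    (mem_range_of_conj_base_mem_range hφ hc hmal hy)).mul_inv_cancel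

end Monoid.PushoutI

namespace Subgroup

variable {G : Type*} [Group G]

theorem orderOf_eq_of_mem_of_card_eq_prime {S : Subgroup G} {p : ℕ} (hp : p.Prime)
    (hS : Nat.card S = p) {x : G} (hx : x ∈ S) (hx1 : x ≠ 1) : orderOf x = p :=
  (hp.eq_one_or_self_of_dvd _ (hS ▸ S.orderOf_dvd_natCard hx)).resolve_left
    (mt orderOf_eq_one_iff.1 hx1)

theorem mem_center_of_forall_eq_mul {C : Type*} [Group C] {Q : Subgroup G} {ι : C →* G} {z : G}
    (hA : ∀ a : G, ∃ u ∈ Q, ∃ c : C, a = u * ι c) (hQ : z ∈ centralizer (Q : Set G))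
    (hι : ∀ c, Commute (ι c) z) : z ∈ center G := by
  refine mem_center_iff.2 fun a => ?_
  obtain ⟨u, hu, c, rfl⟩ := hA a
  exact Commute.mul_left (mem_centralizer_iff.1 hQ u hu) (hι c)

theorem mem_of_conj_mem_of_normalizer_eq {R S : Subgroup G} {n : ℕ}
    (huniq : ∀ D ≤ R, Nat.card D = n → D = S) (hnorm : normalizer (S : Set G) = R)
    {y : G} (hy : y ∈ R) (hyn : orderOf y = n) {b : G} (hb : b * y * b⁻¹ ∈ R) : b ∈ R := by
  have hS : zpowers y = S := huniq _ (zpowers_le.2 hy) (by rw [Nat.card_zpowers, hyn])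
  rw [← hnorm, mem_normalizer_iff_map_conj_eq]
  refine huniq _ ?_ ?_
  · rw [← hS, MonoidHom.map_zpowers]
    exact zpowers_le.2 hb
  · rw [card_map_of_injective (MulAut.conj b).injective, ← hS, Nat.card_zpowers, hyn]

end Subgroup

theorem amalgam_center_elements_isolated_general
    (p q : ℕ) (hp : p.Prime) (hq : q.Prime)
    {A B C : Type} [Group A] [Group B] [Group C]
    -- `Q` is a nonabelian normal Sylow `q`-subgroup of `A`,
    -- `P` is a nonabelian normal Sylow `p`-subgroup of `B`
    (Q : Sylow q A) (P : Sylow p B)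
    -- `ZQ = Z(Q)` has order `q` and `ZP = Z(P)` has order `p`
    (ZQ : Subgroup A)
    (hZQ : ZQ = (Q : Subgroup A) ⊓ Subgroup.centralizer ((Q : Subgroup A) : Set A))
    (hZQcard : Nat.card ZQ = q)
    (ZP : Subgroup B)
    (hZP : ZP = (P : Subgroup B) ⊓ Subgroup.centralizer ((P : Subgroup B) : Set B))
    (hZPcard : Nat.card ZP = p)
    -- `C` is cyclic of order `p * q`, embedded in `A` and `B`
    (hC : IsCyclic C)
    (ιA : C →* A) (ιB : C →* B)
    (hιA : Function.Injective ιA) (hιB : Function.Injective ιB)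
    -- `ιA(C)` is self-normalizing in `A`, contains `Z(Q)` as its unique subgroup of
    -- order `q`, and `A = Q * ιA(C)`
    (hZQle : ZQ ≤ ιA.range)
    (hAfact : ∀ a : A, ∃ u ∈ (Q : Subgroup A), ∃ c : C, a = u * ιA c)
    -- `ιB(C)` is self-normalizing in `B`, contains `Z(P)` as its unique subgroup of
    -- order `p`, and `B = P * ιB(C)`
    (hZPle : ZP ≤ ιB.range)
    (hBfact : ∀ b : B, ∃ u ∈ (P : Subgroup B), ∃ c : C, b = u * ιB c)
    -- `SpA` is the unique subgroup of order `p` of `ιA(C)`, and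
    -- `SqB` is the unique subgroup of order `q` of `ιB(C)`
    (SpA : Subgroup A)
    (hSpA_uniq : ∀ D : Subgroup A, D ≤ ιA.range → Nat.card D = p → D = SpA)
    (SqB : Subgroup B)
    (hSqB_uniq : ∀ D : Subgroup B, D ≤ ιB.range → Nat.card D = q → D = SqB)
    -- the normalizer conditions `N_B(S_q) = ιB(C)` and `N_A(S_p) = ιA(C)`
    (hSqB_norm : Subgroup.normalizer (SqB : Set B) = ιB.range)
    (hSpA_norm : Subgroup.normalizer (SpA : Set A) = ιA.range)
    :
    (∀ z : Amalgam ιA ιB, z ∈ ZQ.map (Amalgam.inA ιA ιB) → z ≠ 1 →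
      ∀ x : Amalgam ιA ιB, Commute z (x * z * x⁻¹) → x * z * x⁻¹ = z) ∧
    (∀ w : Amalgam ιA ιB, w ∈ ZP.map (Amalgam.inB ιA ιB) → w ≠ 1 →
      ∀ x : Amalgam ιA ιB, Commute w (x * w * x⁻¹) → x * w * x⁻¹ = w) := by
  have hφ : ∀ i, Function.Injective (amalgamMaps ιA ιB i) := by rintro (_ | _) <;> assumption
  have hCcomm (c c' : C) : Commute c c' := hC.isMulCommutative.is_comm.comm c c'
  constructor
  · rintro _ ⟨_, hz, rfl⟩ hz1
    obtain ⟨c, rfl⟩ := hZQle hz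
    have hord : orderOf (ιB c) = q := by
      rw [orderOf_injective ιB hιB, ← orderOf_injective ιA hιA]
      exact Subgroup.orderOf_eq_of_mem_of_card_eq_prime hq hZQcard hz fun h => hz1 (h ▸ map_one _)
    have hbase : Amalgam.inA ιA ιB (ιA c) = Monoid.PushoutI.base _ c :=
      Monoid.PushoutI.of_apply_eq_base (amalgamMaps ιA ιB) true c
    rw [hbase]
    refine Monoid.PushoutI.isIsolated_base (i := true) hφ
      (Subgroup.mem_center_of_forall_eq_mul hAfact (hZQ ▸ hz).2 fun c' => (hCcomm c' c).map ιA) ?_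
    rintro (_ | _) hj g hg
    · exact Subgroup.mem_of_conj_mem_of_normalizer_eq hSqB_uniq hSqB_norm ⟨c, rfl⟩ hord hg
    · exact absurd rfl hj
  · rintro _ ⟨_, hz, rfl⟩ hz1
    obtain ⟨c, rfl⟩ := hZPle hz
    have hord : orderOf (ιA c) = p := by
      rw [orderOf_injective ιA hιA, ← orderOf_injective ιB hιB]
      exact Subgroup.orderOf_eq_of_mem_of_card_eq_prime hp hZPcard hz fun h => hz1 (h ▸ map_one _)
    have hbase : Amalgam.inB ιA ιB (ιB c) = Monoid.PushoutI.base _ c :=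
      Monoid.PushoutI.of_apply_eq_base (amalgamMaps ιA ιB) false c
    rw [hbase]
    refine Monoid.PushoutI.isIsolated_base (i := false) hφ
      (Subgroup.mem_center_of_forall_eq_mul hBfact (hZP ▸ hz).2 fun c' => (hCcomm c' c).map ιB) ?_
    rintro (_ | _) hj g hg
    · exact absurd rfl hj
    · exact Subgroup.mem_of_conj_mem_of_normalizer_eq hSpA_uniq hSpA_norm ⟨c, rfl⟩ hord hg

/-- Every nonidentity element `z` of `Z(Q)` is isolated in `X`: if `z` commutes with
a conjugate `x * z * x⁻¹`, then `x * z * x⁻¹ = z`. Symmetrically, every nonidentity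
element of `Z(P)` is isolated in `X`. -/
theorem amalgam_center_elements_isolated
    (p q : ℕ) (hp : p.Prime) (hq : q.Prime) (hpodd : Odd p) (hqodd : Odd q)
    (hpq : p ≠ q)
    {A B C : Type} [Group A] [Group B] [Group C] [Finite A] [Finite B]
    -- `Q` is a nonabelian normal Sylow `q`-subgroup of `A`,
    -- `P` is a nonabelian normal Sylow `p`-subgroup of `B`
    (Q : Sylow q A) (P : Sylow p B)
    (hQnormal : (Q : Subgroup A).Normal) (hPnormal : (P : Subgroup B).Normal)
    (hQnonab : ¬ IsMulCommutative ↥(Q : Subgroup A))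
    (hPnonab : ¬ IsMulCommutative ↥(P : Subgroup B))
    -- `ZQ = Z(Q)` has order `q` and `ZP = Z(P)` has order `p`
    (ZQ : Subgroup A)
    (hZQ : ZQ = (Q : Subgroup A) ⊓ Subgroup.centralizer ((Q : Subgroup A) : Set A))
    (hZQcard : Nat.card ZQ = q)
    (ZP : Subgroup B)
    (hZP : ZP = (P : Subgroup B) ⊓ Subgroup.centralizer ((P : Subgroup B) : Set B))
    (hZPcard : Nat.card ZP = p)
    -- `C` is cyclic of order `p * q`, embedded in `A` and `B`
    (hC : IsCyclic C) (hCcard : Nat.card C = p * q)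
    (ιA : C →* A) (ιB : C →* B)
    (hιA : Function.Injective ιA) (hιB : Function.Injective ιB)
    -- `ιA(C)` is self-normalizing in `A`, contains `Z(Q)` as its unique subgroup of
    -- order `q`, and `A = Q * ιA(C)`
    (hCA_selfnorm : Subgroup.normalizer (ιA.range : Set A) = ιA.range)
    (hZQle : ZQ ≤ ιA.range)
    (hZQuniq : ∀ D : Subgroup A, D ≤ ιA.range → Nat.card D = q → D = ZQ)
    (hAfact : ∀ a : A, ∃ u ∈ (Q : Subgroup A), ∃ c : C, a = u * ιA c)
    -- `ιB(C)` is self-normalizing in `B`, contains `Z(P)` as its unique subgroup of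
    -- order `p`, and `B = P * ιB(C)`
    (hCB_selfnorm : Subgroup.normalizer (ιB.range : Set B) = ιB.range)
    (hZPle : ZP ≤ ιB.range)
    (hZPuniq : ∀ D : Subgroup B, D ≤ ιB.range → Nat.card D = p → D = ZP)
    (hBfact : ∀ b : B, ∃ u ∈ (P : Subgroup B), ∃ c : C, b = u * ιB c)
    -- `SpA` is the unique subgroup of order `p` of `ιA(C)`, and
    -- `SqB` is the unique subgroup of order `q` of `ιB(C)`
    (SpA : Subgroup A) (hSpA_le : SpA ≤ ιA.range) (hSpA_card : Nat.card SpA = p)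
    (hSpA_uniq : ∀ D : Subgroup A, D ≤ ιA.range → Nat.card D = p → D = SpA)
    (SqB : Subgroup B) (hSqB_le : SqB ≤ ιB.range) (hSqB_card : Nat.card SqB = q)
    (hSqB_uniq : ∀ D : Subgroup B, D ≤ ιB.range → Nat.card D = q → D = SqB)
    -- the normalizer conditions `N_B(S_q) = ιB(C)` and `N_A(S_p) = ιA(C)`
    (hSqB_norm : Subgroup.normalizer (SqB : Set B) = ιB.range)
    (hSpA_norm : Subgroup.normalizer (SpA : Set A) = ιA.range)
    -- the commutator conditions `[Q, S_p] = Q` and `[P, S_q] = P`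
    (hQcommutator : ⁅(Q : Subgroup A), SpA⁆ = (Q : Subgroup A))
    (hPcommutator : ⁅(P : Subgroup B), SqB⁆ = (P : Subgroup B))
    :
    (∀ z : Amalgam ιA ιB, z ∈ ZQ.map (Amalgam.inA ιA ιB) → z ≠ 1 →
      ∀ x : Amalgam ιA ιB, Commute z (x * z * x⁻¹) → x * z * x⁻¹ = z) ∧
    (∀ w : Amalgam ιA ιB, w ∈ ZP.map (Amalgam.inB ιA ιB) → w ≠ 1 →
      ∀ x : Amalgam ιA ιB, Commute w (x * w * x⁻¹) → x * w * x⁻¹ = w) :=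
  amalgam_center_elements_isolated_general p q hp hq Q P ZQ hZQ hZQcard ZP hZP hZPcard hC ιA ιB hιA
    hιB hZQle hAfact hZPle hBfact SpA hSpA_uniq SqB hSqB_uniq hSqB_norm hSpA_norm
end

section
/- Let G be a group in which every nonidentity element has an infinite conjugacy class, and let F be a field. Then the center of the group algebra FG is one-dimensional over F; that is, the center of FG consists exactly of the scalar multiples of the identity element. -/
/-!
If `z` is central in `F[G]`, commuting `z` with the basis elements `single h 1` shows that the
coefficient function of `z` is constant on conjugacy classes. Its support is finite, so it can
only meet finite conjugacy classes, and under the hypothesis the only one is `{1}`. Hence `z` is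
a multiple of `single 1 1 = 1`.
-/

namespace Finsupp

variable {G M : Type*} [Group G] [Zero M]

theorem finite_setOf_isConj_of_conj_invariant (f : G →₀ M)
    (hf : ∀ g h : G, f (h * g * h⁻¹) = f g) {g : G} (hg : f g ≠ 0) :
    {x : G | IsConj g x}.Finite := by
  refine f.support.finite_toSet.subset fun x hx => ?_
  obtain ⟨c, rfl⟩ := isConj_iff.mp hx
  simpa [hf] using hg

theorem support_subset_one_of_conj_invariant
    (hG : ∀ g : G, g ≠ 1 → {x : G | IsConj g x}.Infinite) (f : G →₀ M)
    (hf : ∀ g h : G, f (h * g * h⁻¹) = f g) : f.support ⊆ {1} := fun g hg =>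
  Finset.mem_singleton.mpr <| of_not_not fun hne =>
    hG g hne (f.finite_setOf_isConj_of_conj_invariant hf (mem_support_iff.mp hg))

end Finsupp

namespace MonoidAlgebra

variable {k G : Type*} [Semiring k] [Group G]

theorem coeff_conj_eq_of_commute_single {z : MonoidAlgebra k G} {h : G}
    (hz : Commute (single h 1) z) (g : G) : z.coeff (h * g * h⁻¹) = z.coeff g := by
  have := congr_arg (fun y : MonoidAlgebra k G => y.coeff (h * g)) hz.eq
  simpa [mul_assoc] using this.symm

theorem eq_single_one_of_forall_commute_single
    (hG : ∀ g : G, g ≠ 1 → {x : G | IsConj g x}.Infinite) {z : MonoidAlgebra k G}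
    (hz : ∀ h : G, Commute (single h 1) z) : z = single 1 (z.coeff 1) :=
  coeff_injective <| Finsupp.support_subset_singleton.mp <|
    z.coeff.support_subset_one_of_conj_invariant hG fun g h =>
      coeff_conj_eq_of_commute_single (hz h) g

end MonoidAlgebra

/-- Let `G` be a group in which every nonidentity element has an infinite conjugacy
class, and let `F` be a field. Then the center of the group algebra `FG` is
one-dimensional over `F`: it consists exactly of the scalar multiples of the identity. -/
theorem center_monoidAlgebra_eq_scalars_of_infinite_conjClasses
    {G : Type} [Group G] (F : Type) [Field F]
    (hG : ∀ g : G, g ≠ 1 → {h : G | IsConj g h}.Infinite) :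
    ∀ z : MonoidAlgebra F G,
      z ∈ Subalgebra.center F (MonoidAlgebra F G) ↔ ∃ c : F, z = c • (1 : MonoidAlgebra F G) := by
  intro z
  constructor
  · intro hz
    refine ⟨z.coeff 1, ?_⟩
    rw [MonoidAlgebra.one_def, MonoidAlgebra.smul_single, smul_eq_mul, mul_one]
    exact MonoidAlgebra.eq_single_one_of_forall_commute_single hG fun h =>
      Subalgebra.mem_center_iff.mp hz _
  · rintro ⟨c, rfl⟩
    exact Subalgebra.smul_mem _ (Subalgebra.one_mem _) c
end

section
/- Let q be a prime, Q a finite q-group whose center Z(Q) has order q, let p be a prime different from q, and let α be an automorphism of Q of order p that acts trivially on Z(Q) and satisfies C_Q(α) = Z(Q) (the fixed-point subgroup of α in Q is exactly Z(Q)). Form the semidirect product A = Q ⋊ ⟨α⟩. Then the subgroup of A generated by Z(Q) and α is cyclic of order p·q and is self-normalizing in A (hence is a Carter subgroup of A). -/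
/-!
Since `α` centralizes `Z(Q)`, the subgroup `H` consists of the `x` with `x.left ∈ Z(Q)` and is
isomorphic to `Z(Q) × ⟨α⟩`, a product of cyclic groups of coprime orders `q` and `p`.
If `x` normalizes `H`, then conjugating `α` by `x` shows that `c = u * α(u)⁻¹` is central, where
`u = x.left`. Then `αⁿ u = c⁻ⁿ u`, so `c ^ p = 1 = c ^ q`, hence `c = 1`: `u` is fixed by `α`, so
it is central and `x ∈ H`.
-/

open Subgroup

theorem MulAut.pow_apply_eq_pow_mul {Q : Type*} [Group Q] (α : MulAut Q) {c u : Q}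
    (hc : α c = c) (hu : α u = c * u) (n : ℕ) : (α ^ n) u = c ^ n * u := by
  induction n with
  | zero => simp
  | succ n ih => rw [pow_succ', MulAut.mul_apply, ih, map_mul, map_pow, hc, hu, pow_succ, mul_assoc]

theorem MulAut.apply_eq_self_of_mul_inv_apply_mem_center {Q : Type*} [Group Q] (α : MulAut Q)
    (hαZ : ∀ z ∈ center Q, α z = z) (hcop : (orderOf α).Coprime (Nat.card (center Q)))
    {u : Q} (hu : u * (α u)⁻¹ ∈ center Q) : α u = u := by
  set c := α u * u⁻¹
  have hc : c ∈ center Q := by simpa [c] using inv_mem hu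
  have hc_order : c ^ orderOf α = 1 := by
    have := α.pow_apply_eq_pow_mul (hαZ c hc) (inv_mul_cancel_right (α u) u).symm (orderOf α)
    rwa [pow_orderOf_eq_one, MulAut.one_apply, right_eq_mul] at this
  have hc_card : c ^ Nat.card (center Q) = 1 := by
    simpa only [SubgroupClass.coe_pow, OneMemClass.coe_one] using
      congrArg Subtype.val (pow_card_eq_one' (x := (⟨c, hc⟩ : center Q)))
  rw [← mul_inv_eq_one, ← (pow_eq_one_iff_of_coprime hcop).1 ⟨hc_order, hc_card⟩]

theorem MulAut.apply_eq_self_of_mem_zpowers {Q : Type*} [Group Q] {α β : MulAut Q} {z : Q}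
    (hαz : α z = z) (hβ : β ∈ zpowers α) : β z = z :=
  zpowers_le.2 (show α ∈ MulAction.stabilizer (MulAut Q) z from hαz) hβ

namespace SemidirectProduct

variable {N G : Type*} [Group N] [Group G] {φ : G →* MulAut N}

def leftMemSubgroup (M : Subgroup N) (hM : ∀ g, ∀ m ∈ M, φ g m ∈ M) : Subgroup (N ⋊[φ] G) where
  carrier := {x | x.left ∈ M}
  mul_mem' hx hy := M.mul_mem hx (hM _ _ hy)
  one_mem' := M.one_mem
  inv_mem' hx := hM _ _ (M.inv_mem hx)

variable {M : Subgroup N} {hM : ∀ g, ∀ m ∈ M, φ g m ∈ M}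

@[simp]
theorem mem_leftMemSubgroup {x : N ⋊[φ] G} : x ∈ leftMemSubgroup M hM ↔ x.left ∈ M := Iff.rfl

theorem closure_inl_union_inr_eq_leftMemSubgroup {T : Set G} (hT : closure T = ⊤) :
    closure (inl '' (M : Set N) ∪ inr '' T) = leftMemSubgroup M hM := by
  refine le_antisymm ((closure_le _).2 ?_) fun x hx => ?_
  · rintro _ (⟨m, hm, rfl⟩ | ⟨g, -, rfl⟩)
    · exact hm
    · exact M.one_mem
  · rw [← inl_left_mul_inr_right x]
    refine mul_mem (subset_closure (Or.inl ⟨x.left, hx, rfl⟩)) ?_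
    have hr : inr x.right ∈ (closure T).map (inr : G →* N ⋊[φ] G) :=
      ⟨x.right, hT ▸ mem_top _, rfl⟩
    rw [MonoidHom.map_closure] at hr
    exact closure_mono Set.subset_union_right hr

theorem normalizer_leftMemSubgroup (h : ∀ n : N, (∀ g, n * (φ g n)⁻¹ ∈ M) → n ∈ M) :
    normalizer (leftMemSubgroup M hM : Set (N ⋊[φ] G)) = leftMemSubgroup M hM := by
  refine le_antisymm (fun (x : N ⋊[φ] G) hx => h x.left fun g => ?_) le_normalizer
  -- conjugating by `x` turns this element into one with left component `x.left * φ g x.left⁻¹`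
  have hconj := (mem_normalizer_iff.mp hx (inr (x.right⁻¹ * g * x.right))).mp M.one_mem
  simpa [mul_assoc] using hconj

def leftMemSubgroupMulEquivProd (htriv : ∀ g, ∀ m ∈ M, φ g m = m) :
    leftMemSubgroup M hM ≃* M × G where
  toFun x := (⟨(x : N ⋊[φ] G).left, x.2⟩, (x : N ⋊[φ] G).right)
  invFun y := ⟨⟨y.1, y.2⟩, y.1.2⟩
  left_inv _ := rfl
  right_inv _ := rfl
  map_mul' x y := by
    ext
    · simp [htriv _ _ y.2]
    · rfl

end SemidirectProduct

open SemidirectProduct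

theorem carter_subgroup_of_extraspecial_semidirect_general
    (q p : ℕ) (hq : q.Prime) (hp : p.Prime) (hpq : p ≠ q)
    (Q : Type) [Group Q]
    (hZQ : Nat.card (Subgroup.center Q) = q)
    (α : MulAut Q) (hα : orderOf α = p)
    (hαfix : ∀ u : Q, α u = u ↔ u ∈ Subgroup.center Q)
    (H : Subgroup (Q ⋊[(Subgroup.zpowers α).subtype] ↥(Subgroup.zpowers α)))
    (hH : H = Subgroup.closure
      ({x | ∃ z ∈ Subgroup.center Q, x = SemidirectProduct.inl z} ∪
        {SemidirectProduct.inr ⟨α, Subgroup.mem_zpowers α⟩})) :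
    IsCyclic H ∧ Nat.card H = p * q ∧ Subgroup.normalizer (H : Set _) = H := by
  have : Fact q.Prime := ⟨hq⟩
  have hαZ (z) (hz : z ∈ center Q) : α z = z := (hαfix z).2 hz
  have htriv (β : zpowers α) (z) (hz : z ∈ center Q) : (zpowers α).subtype β z = z :=
    MulAut.apply_eq_self_of_mem_zpowers (hαZ z hz) β.2
  have hgen : closure {(⟨α, mem_zpowers α⟩ : zpowers α)} = ⊤ := by
    rw [← zpowers_eq_closure, eq_top_iff]
    rintro ⟨_, k, rfl⟩ -
    exact ⟨k, rfl⟩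
  have hHK : H = leftMemSubgroup (center Q) fun β z hz => (htriv β z hz).symm ▸ hz := by
    rw [hH, ← closure_inl_union_inr_eq_leftMemSubgroup hgen, Set.image_singleton]
    congr
    ext
    simp [eq_comm]
  have hcop : (Nat.card (center Q)).Coprime (Nat.card (zpowers α)) := by
    rw [hZQ, Nat.card_zpowers, hα]
    exact (Nat.coprime_primes hq hp).2 hpq.symm
  let e : H ≃* center Q × zpowers α :=
    (MulEquiv.subgroupCongr hHK).trans (leftMemSubgroupMulEquivProd htriv)
  refine ⟨?_, ?_, ?_⟩
  · exact e.symm.isCyclic.1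
      (Group.isCyclic_prod_iff.2 ⟨isCyclic_of_prime_card hZQ, inferInstance, hcop⟩)
  · rw [Nat.card_congr e.toEquiv, Nat.card_prod, hZQ, Nat.card_zpowers, hα, mul_comm]
  · rw [hHK]
    refine normalizer_leftMemSubgroup fun u hu => (hαfix u).1 ?_
    refine α.apply_eq_self_of_mul_inv_apply_mem_center hαZ ?_ (hu ⟨α, mem_zpowers α⟩)
    rwa [← Nat.card_zpowers, Nat.coprime_comm]

/-- Let `q` be a prime, `Q` a finite `q`-group whose center has order `q`, `p` a prime
different from `q`, and `α` an automorphism of `Q` of order `p` acting trivially on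
`Z(Q)` with fixed-point subgroup exactly `Z(Q)`. In the semidirect product
`A = Q ⋊ ⟨α⟩`, the subgroup generated by `Z(Q)` and `α` is cyclic of order `p * q`
and self-normalizing in `A` (hence a Carter subgroup of `A`). -/
theorem carter_subgroup_of_extraspecial_semidirect
    (q p : ℕ) (hq : q.Prime) (hp : p.Prime) (hpq : p ≠ q)
    (Q : Type) [Group Q] [Finite Q] (hQ : IsPGroup q Q)
    (hZQ : Nat.card (Subgroup.center Q) = q)
    (α : MulAut Q) (hα : orderOf α = p)
    (hαZ : ∀ z ∈ Subgroup.center Q, α z = z)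
    (hαfix : ∀ u : Q, α u = u ↔ u ∈ Subgroup.center Q)
    (H : Subgroup (Q ⋊[(Subgroup.zpowers α).subtype] ↥(Subgroup.zpowers α)))
    (hH : H = Subgroup.closure
      ({x | ∃ z ∈ Subgroup.center Q, x = SemidirectProduct.inl z} ∪
        {SemidirectProduct.inr ⟨α, Subgroup.mem_zpowers α⟩})) :
    IsCyclic H ∧ Nat.card H = p * q ∧ Subgroup.normalizer (H : Set _) = H :=
  carter_subgroup_of_extraspecial_semidirect_general q p hq hp hpq Q hZQ α hα hαfix H hH
end
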